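/- arXiv:2007.10421 — 5 statements merged into one kernel-verified Lean document; each statement's English description precedes it below -/
import Mathlib

section
/- For any integer k ≥ 1, the space of vector polynomials R_k = P_{k-1}^3 ⊕ S_k, where S_k = {p ∈ (homogeneous polynomials of degree k)^3 : x·p(x) = 0 for all x ∈ ℝ³}, has dimension k(k+2)(k+3)/2. -/
/-
The map `p ↦ x · p` sends `(H_k)³` onto `H_{k+1}`, where `H_n` is the space of homogeneous
polynomials of degree `n`: every monomial of degree `k + 1` is some `xᵢ` times a monomial of
degree `k`. Its kernel is `S_k`, so `dim S_k = 3 dim H_k - dim H_{k+1}`. The sum defining `R_k` is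
direct because its summands live in different degrees, so `dim R_k = 3 dim P_{k-1} + dim S_k`.
Counting monomials gives `dim H_n = C(n+2, 2)` and `dim P_m = C(m+3, 3)`, and the formula follows.
-/

open MvPolynomial

/-- The linear map `p ↦ x · p(x) = ∑ i, xᵢ * pᵢ` on vector polynomials. -/
noncomputable def dotX : (Fin 3 → MvPolynomial (Fin 3) ℝ) →ₗ[ℝ] MvPolynomial (Fin 3) ℝ where
  toFun p := ∑ i, X i * p i
  map_add' p q := by simp [mul_add, Finset.sum_add_distrib]
  map_smul' c p := by simp [Finset.smul_sum, mul_smul_comm]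

/-- `S_k`: vector polynomials, homogeneous of degree `k` in each component,
satisfying `x · p(x) = 0`. -/
noncomputable def Sspace (k : ℕ) : Submodule ℝ (Fin 3 → MvPolynomial (Fin 3) ℝ) :=
  (Submodule.pi Set.univ fun _ : Fin 3 => homogeneousSubmodule (Fin 3) ℝ k) ⊓
    LinearMap.ker dotX

/-- `R_k = (P_{k-1})³ ⊕ S_k`, the first-kind Nédélec space. -/
noncomputable def Rspace (k : ℕ) : Submodule ℝ (Fin 3 → MvPolynomial (Fin 3) ℝ) :=
  (Submodule.pi Set.univ fun _ : Fin 3 => restrictTotalDegree (Fin 3) ℝ (k - 1)) ⊔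
    Sspace k

open Finset

namespace Nat

theorem two_mul_multichoose_three (n : ℕ) : 2 * multichoose 3 n = (n + 1) * (n + 2) := by
  induction n with
  | zero => simp [multichoose_zero_right]
  | succ n ih => rw [multichoose_succ_succ, multichoose_two]; linarith

theorem six_mul_choose_three (n : ℕ) : 6 * (n + 3).choose 3 = (n + 1) * (n + 2) * (n + 3) := by
  rw [show 6 = (3 : ℕ)! from rfl, ← descFactorial_eq_factorial_mul_choose,
    add_descFactorial_eq_ascFactorial, ascFactorial_succ, ascFactorial_succ, ascFactorial_succ,
    ascFactorial_zero]
  ring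

end Nat

namespace Finsupp

variable {σ : Type*} [Fintype σ]

theorem card_degree_eq (n : ℕ) :
    Nat.card {d : σ →₀ ℕ | d.degree = n} = (Fintype.card σ).multichoose n := by
  classical
  have : {d : σ →₀ ℕ | d.degree = n} = ↑(univ.finsuppAntidiag n : Finset (σ →₀ ℕ)) :=
    Set.ext fun d => by simp [mem_finsuppAntidiag, degree_eq_sum]
  rw [this, Nat.card_coe_set_eq, Set.ncard_coe_finset, card_finsuppAntidiag_nat_eq_multichoose,
    card_univ]

theorem card_degree_le (m : ℕ) :
    Nat.card {d : σ →₀ ℕ | d.degree ≤ m} =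
      (m + Fintype.card σ).choose (Fintype.card σ) := by
  classical
  have : {d : σ →₀ ℕ | d.degree ≤ m} =
      ↑((range (m + 1)).biUnion (univ.finsuppAntidiag ·) : Finset (σ →₀ ℕ)) :=
    Set.ext fun d => by simp [mem_finsuppAntidiag, degree_eq_sum]
  rw [this, Nat.card_coe_set_eq, Set.ncard_coe_finset, card_biUnion, ← Nat.sum_range_multichoose]
  · simp [card_finsuppAntidiag_nat_eq_multichoose]
  · intro i _ j _ hij
    exact disjoint_left.2 fun d hi hj =>
      hij ((mem_finsuppAntidiag.1 hi).1.symm.trans (mem_finsuppAntidiag.1 hj).1)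

end Finsupp

namespace MvPolynomial

variable {σ R : Type*}

theorem finrank_homogeneousSubmodule [Fintype σ] [CommRing R] [Nontrivial R] (n : ℕ) :
    Module.finrank R (homogeneousSubmodule σ R n) = (Fintype.card σ).multichoose n := by
  rw [homogeneousSubmodule_eq_finsupp_supported]
  exact (Module.finrank_eq_nat_card_basis (basisRestrictSupport R _)).trans
    (Finsupp.card_degree_eq n)

theorem finrank_restrictTotalDegree [Fintype σ] [CommRing R] [Nontrivial R] (m : ℕ) :
    Module.finrank R (restrictTotalDegree σ R m) =
      (m + Fintype.card σ).choose (Fintype.card σ) :=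
  (Module.finrank_eq_nat_card_basis (basisRestrictSupport R _)).trans (Finsupp.card_degree_le m)

theorem homogeneousSubmodule_le_restrictTotalDegree [CommSemiring R] (n : ℕ) :
    homogeneousSubmodule σ R n ≤ restrictTotalDegree σ R n := fun p hp =>
  (mem_restrictTotalDegree σ n p).2 hp.totalDegree_le

instance [Finite σ] {K : Type*} [Field K] (n : ℕ) :
    FiniteDimensional K (homogeneousSubmodule σ K n) :=
  Submodule.finiteDimensional_of_le (homogeneousSubmodule_le_restrictTotalDegree n)

theorem disjoint_restrictTotalDegree_homogeneousSubmodule [CommSemiring R] {m n : ℕ}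
    (h : m < n) : Disjoint (restrictTotalDegree σ R m) (homogeneousSubmodule σ R n) := by
  refine Submodule.disjoint_def.2 fun p hm hn => by_contra fun hp => ?_
  have := (mem_restrictTotalDegree σ m p).1 hm
  have := IsHomogeneous.totalDegree hn hp
  omega

end MvPolynomial

namespace Submodule

variable {ι R : Type*} [Semiring R] {M : ι → Type*} [∀ i, AddCommMonoid (M i)]
  [∀ i, Module R (M i)]

def piUnivEquiv (p : ∀ i, Submodule R (M i)) : pi Set.univ p ≃ₗ[R] ∀ i, p i where
  toFun x i := ⟨x.1 i, x.2 i trivial⟩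
  invFun f := ⟨fun i => f i, fun i _ => (f i).2⟩
  map_add' _ _ := rfl
  map_smul' _ _ := rfl

instance [Finite ι] (p : ∀ i, Submodule R (M i)) [∀ i, Module.Finite R (p i)] :
    Module.Finite R (pi Set.univ p) :=
  Module.Finite.equiv (piUnivEquiv p).symm

theorem finrank_pi_univ [Fintype ι] [StrongRankCondition R] (p : ∀ i, Submodule R (M i))
    [∀ i, Module.Free R (p i)] [∀ i, Module.Finite R (p i)] :
    Module.finrank R (pi Set.univ p) = ∑ i, Module.finrank R (p i) := by
  rw [(piUnivEquiv p).finrank_eq, Module.finrank_pi_fintype]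

theorem disjoint_pi_univ {p q : ∀ i, Submodule R (M i)} (h : ∀ i, Disjoint (p i) (q i)) :
    Disjoint (pi Set.univ p) (pi Set.univ q) := by
  refine disjoint_def.2 fun x hp hq => funext fun i => ?_
  exact disjoint_def.1 (h i) _ (hp i trivial) (hq i trivial)

end Submodule

theorem LinearMap.finrank_map_add_finrank_inf_ker {K V V₂ : Type*} [DivisionRing K]
    [AddCommGroup V] [Module K V] [AddCommGroup V₂] [Module K V₂] (f : V →ₗ[K] V₂)
    (W : Submodule K V) [FiniteDimensional K W] :
    Module.finrank K (W.map f) + Module.finrank K ↥(W ⊓ ker f) = Module.finrank K W := by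
  rw [← range_domRestrict, ← Submodule.map_comap_subtype, Submodule.finrank_map_subtype_eq,
    ← ker_domRestrict]
  exact (f.domRestrict W).finrank_range_add_finrank_ker

lemma dotX_single (i : Fin 3) (q : MvPolynomial (Fin 3) ℝ) : dotX (Pi.single i q) = X i * q := by
  simp [dotX, Pi.single_apply]

lemma map_dotX_pi_homogeneousSubmodule (k : ℕ) :
    (Submodule.pi Set.univ fun _ : Fin 3 => homogeneousSubmodule (Fin 3) ℝ k).map dotX =
      homogeneousSubmodule (Fin 3) ℝ (k + 1) := by
  refine le_antisymm (Submodule.map_le_iff_le_comap.2 fun p hp => ?_) ?_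
  · change ∑ i, X i * p i ∈ homogeneousSubmodule (Fin 3) ℝ (k + 1)
    rw [add_comm]
    exact Submodule.sum_mem _ fun i _ => (isHomogeneous_X ℝ i).mul (hp i trivial)
  rw [homogeneousSubmodule_eq_finsupp_supported, AddMonoidAlgebra.supported_eq_span_single,
    Submodule.span_le]
  rintro _ ⟨d, hd : d.degree = k + 1, rfl⟩
  obtain ⟨i, hi⟩ : ∃ i, d i ≠ 0 := by
    by_contra! h
    have : d = 0 := Finsupp.ext h
    simp [this] at hd
  obtain ⟨e, rfl⟩ : ∃ e, d = Finsupp.single i 1 + e :=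
    le_iff_exists_add.1 (Finsupp.single_le_iff.2 (Nat.one_le_iff_ne_zero.2 hi))
  have he : e.degree = k := by rw [map_add, Finsupp.degree_single] at hd; omega
  refine ⟨Pi.single i (monomial e 1), fun j _ => ?_, ?_⟩
  · rcases eq_or_ne j i with rfl | hj
    · simpa using isHomogeneous_monomial 1 he
    · simp [Pi.single_eq_of_ne hj]
  · change dotX _ = monomial (Finsupp.single i 1 + e) 1
    rw [dotX_single, monomial_single_add, pow_one]

lemma finrank_Sspace_add_multichoose (k : ℕ) :
    Module.finrank ℝ (Sspace k) + Nat.multichoose 3 (k + 1) = 3 * Nat.multichoose 3 k := by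
  have := dotX.finrank_map_add_finrank_inf_ker
    (Submodule.pi Set.univ fun _ : Fin 3 => homogeneousSubmodule (Fin 3) ℝ k)
  rw [map_dotX_pi_homogeneousSubmodule, Submodule.finrank_pi_univ] at this
  simp only [finrank_homogeneousSubmodule, Fintype.card_fin, sum_const, card_univ,
    smul_eq_mul] at this
  rw [add_comm]
  exact this

instance (k : ℕ) : FiniteDimensional ℝ (Sspace k) :=
  Submodule.finiteDimensional_of_le inf_le_left

lemma finrank_Rspace {k : ℕ} (hk : 1 ≤ k) :
    Module.finrank ℝ (Rspace k) = 3 * (k + 2).choose 3 + Module.finrank ℝ (Sspace k) := by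
  have hdisj : Disjoint
      (Submodule.pi Set.univ fun _ : Fin 3 => restrictTotalDegree (Fin 3) ℝ (k - 1)) (Sspace k) :=
    (Submodule.disjoint_pi_univ fun _ =>
      disjoint_restrictTotalDegree_homogeneousSubmodule (by omega)).mono_right inf_le_left
  have := Submodule.finrank_sup_add_finrank_inf_eq
    (Submodule.pi Set.univ fun _ : Fin 3 => restrictTotalDegree (Fin 3) ℝ (k - 1)) (Sspace k)
  rw [hdisj.eq_bot, finrank_bot, add_zero, Submodule.finrank_pi_univ] at this
  simp only [finrank_restrictTotalDegree, Fintype.card_fin, sum_const, card_univ, smul_eq_mul,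
    show k - 1 + 3 = k + 2 by omega] at this
  exact this

theorem dim_Rspace (k : ℕ) (hk : 1 ≤ k) :
    Module.finrank ℝ (Rspace k) = k * (k + 2) * (k + 3) / 2 := by
  obtain ⟨n, rfl⟩ : ∃ n, k = n + 1 := ⟨k - 1, by omega⟩
  rw [finrank_Rspace hk]
  refine (Nat.div_eq_of_eq_mul_left two_pos ?_).symm
  linarith [finrank_Sspace_add_multichoose (n + 1), Nat.six_mul_choose_three n,
    Nat.two_mul_multichoose_three (n + 1), Nat.two_mul_multichoose_three (n + 2)]
end

section
/- For any integer k ≥ 0, the space of ℝ³-valued polynomials of degree at most k in three variables decomposes as a direct sum P_k³ = ∇P_{k+1} ⊕ (x × P_{k-1}³), where x × P_{k-1}³ = {x × q(x) : q ∈ P_{k-1}³}. -/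
open MvPolynomial

/-- Scalar polynomials of degree at most `n` (with `P_{-1} = {0}` for negative `n`). -/
noncomputable def Pscal (n : ℤ) : Submodule ℝ (MvPolynomial (Fin 3) ℝ) :=
  if 0 ≤ n then restrictTotalDegree (Fin 3) ℝ n.toNat else ⊥

/-- Vector polynomials of degree at most `n` in each component. -/
noncomputable def Pvec (n : ℤ) : Submodule ℝ (Fin 3 → MvPolynomial (Fin 3) ℝ) :=
  Submodule.pi Set.univ fun _ : Fin 3 => Pscal n

/-- The gradient as a linear map on polynomials. -/
noncomputable def gradLM : MvPolynomial (Fin 3) ℝ →ₗ[ℝ] (Fin 3 → MvPolynomial (Fin 3) ℝ) where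
  toFun p := fun i => pderiv i p
  map_add' p q := by funext i; simp
  map_smul' c p := by funext i; simp

/-- The linear map `q ↦ x × q(x)` on vector polynomials. -/
noncomputable def crossX : (Fin 3 → MvPolynomial (Fin 3) ℝ) →ₗ[ℝ]
    (Fin 3 → MvPolynomial (Fin 3) ℝ) where
  toFun q := fun i => X (i + 1) * q (i + 2) - X (i + 2) * q (i + 1)
  map_add' p q := by funext i; simp [mul_add]; ring
  map_smul' c p := by funext i; simp [mul_smul_comm, smul_sub]

/-!
Euler's identity says that the radial derivative `x · ∇` multiplies a homogeneous polynomial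
of degree `m` by `m`. Since `x · (x × q) = 0`, a gradient `∇p` of the form `x × q` has
`x · ∇p = 0`, which forces `p` to be constant, so `∇p = 0`. Conversely, a homogeneous `v` of
degree `m` is `∇p + w` with `p = (x · v) / (m + 1)`; then `x · w = 0` by Euler, and the identity
`x × curl w = ∇(x · w) - w - (x · ∇) w = -(m + 1) w` exhibits `w` as `x × q`.
Summing over homogeneous components gives the decomposition of `P_k³`.
-/

open Finset

section Scalar

variable {σ R : Type*} [CommSemiring R]

theorem totalDegree_pderiv_le (p : MvPolynomial σ R) (i : σ) :
    (pderiv i p).totalDegree ≤ p.totalDegree - 1 := by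
  conv_lhs => rw [← p.sum_homogeneousComponent]
  rw [map_sum]
  refine (totalDegree_finsetSum _ _).trans (Finset.sup_le fun m hm => ?_)
  have := mem_range.mp hm
  exact (homogeneousComponent_isHomogeneous m p).pderiv.totalDegree_le.trans (by omega)

theorem sum_homogeneousComponent_of_totalDegree_le {p : MvPolynomial σ R} {k : ℕ}
    (hp : p.totalDegree ≤ k) : ∑ m ∈ range (k + 1), homogeneousComponent m p = p := by
  have hsub : range (p.totalDegree + 1) ⊆ range (k + 1) := range_subset_range.mpr (by omega)
  rw [← sum_subset hsub fun m _ hm => homogeneousComponent_eq_zero m p (by simpa using hm),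
    sum_homogeneousComponent]

theorem homogeneousComponent_sum_X_mul_pderiv [Fintype σ] (p : MvPolynomial σ R) (n : ℕ) :
    homogeneousComponent n (∑ i, X i * pderiv i p) = n • homogeneousComponent n p := by
  have euler : ∑ i, X i * pderiv i p =
      ∑ m ∈ range (p.totalDegree + 1), m • homogeneousComponent m p := by
    conv_lhs => rw [← p.sum_homogeneousComponent]
    simp only [map_sum, mul_sum]
    rw [sum_comm]
    exact sum_congr rfl fun m _ => (homogeneousComponent_isHomogeneous m p).sum_X_mul_pderiv
  rw [euler, map_sum]
  simp only [map_nsmul, homogeneousComponent_of_mem (homogeneousComponent_mem _ p), smul_ite,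
    smul_zero, sum_ite_eq, mem_range]
  split_ifs with hn
  · rfl
  · rw [homogeneousComponent_eq_zero n p (by omega), smul_zero]

theorem eq_C_of_sum_X_mul_pderiv_eq_zero [Fintype σ] [IsAddTorsionFree R]
    {p : MvPolynomial σ R} (h : ∑ i, X i * pderiv i p = 0) : p = C (coeff 0 p) := by
  ext d
  rcases eq_or_ne d 0 with rfl | hd
  · simp
  have hdeg : d.degree ≠ 0 := by simpa [Finsupp.degree_eq_zero_iff] using hd
  have := congrArg (coeff d) (homogeneousComponent_sum_X_mul_pderiv p d.degree)
  rw [h, map_zero, coeff_zero, coeff_smul, coeff_homogeneousComponent, if_pos rfl] at this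
  classical
  rw [coeff_C, if_neg (Ne.symm hd), ← nsmul_eq_zero_iff_right hdeg, this]

end Scalar

theorem mem_Pscal_natCast {n : ℕ} {p : MvPolynomial (Fin 3) ℝ} :
    p ∈ Pscal n ↔ p.totalDegree ≤ n := by
  simp [Pscal, mem_restrictTotalDegree]

theorem Pscal_eq_bot {n : ℤ} (hn : n < 0) : Pscal n = ⊥ := by
  simp [Pscal, not_le.mpr hn]

theorem Pscal_mono : Monotone Pscal := by
  intro m n hmn p hp
  rcases lt_or_ge m 0 with hm | hm
  · rw [Pscal_eq_bot hm, Submodule.mem_bot] at hp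
    simp [hp]
  lift m to ℕ using hm
  lift n to ℕ using (Int.natCast_nonneg m).trans hmn
  rw [mem_Pscal_natCast] at hp ⊢
  omega

theorem MvPolynomial.IsHomogeneous.mem_Pscal {n : ℕ} {p : MvPolynomial (Fin 3) ℝ}
    (hp : p.IsHomogeneous n) : p ∈ Pscal n :=
  mem_Pscal_natCast.mpr hp.totalDegree_le

theorem pderiv_mem_Pscal {n : ℤ} {p : MvPolynomial (Fin 3) ℝ} (hp : p ∈ Pscal n) (i : Fin 3) :
    pderiv i p ∈ Pscal (n - 1) := by
  rcases lt_or_ge n 0 with hn | hn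
  · rw [Pscal_eq_bot hn, Submodule.mem_bot] at hp
    simp [hp]
  lift n to ℕ using hn
  rw [mem_Pscal_natCast] at hp
  cases n with
  | zero =>
    rw [Nat.le_zero, totalDegree_eq_zero_iff_eq_C] at hp
    rw [hp, pderiv_C]
    exact zero_mem _
  | succ n =>
    rw [Nat.cast_succ, add_sub_cancel_right, mem_Pscal_natCast]
    exact (totalDegree_pderiv_le p i).trans (by omega)

theorem X_mul_mem_Pscal {n : ℤ} {p : MvPolynomial (Fin 3) ℝ} (hp : p ∈ Pscal n) (i : Fin 3) :
    X i * p ∈ Pscal (n + 1) := by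
  rcases lt_or_ge n 0 with hn | hn
  · rw [Pscal_eq_bot hn, Submodule.mem_bot] at hp
    simp [hp]
  lift n to ℕ using hn
  rw [mem_Pscal_natCast] at hp
  rw [← Nat.cast_succ, mem_Pscal_natCast]
  exact (totalDegree_mul _ _).trans (by rw [totalDegree_X]; omega)

theorem mem_Pvec {n : ℤ} {v : Fin 3 → MvPolynomial (Fin 3) ℝ} :
    v ∈ Pvec n ↔ ∀ i, v i ∈ Pscal n := by
  simp [Pvec, Submodule.mem_pi]

theorem Pvec_mono : Monotone Pvec := fun _ _ hmn _ hv =>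
  mem_Pvec.mpr fun i => Pscal_mono hmn (mem_Pvec.mp hv i)

@[simp]
theorem gradLM_apply (p : MvPolynomial (Fin 3) ℝ) (i : Fin 3) : gradLM p i = pderiv i p := rfl

@[simp]
theorem crossX_apply (q : Fin 3 → MvPolynomial (Fin 3) ℝ) (i : Fin 3) :
    crossX q i = X (i + 1) * q (i + 2) - X (i + 2) * q (i + 1) := rfl

theorem map_gradLM_Pscal_le (n : ℤ) : (Pscal (n + 1)).map gradLM ≤ Pvec n := by
  rintro _ ⟨p, hp, rfl⟩
  exact mem_Pvec.mpr fun i => by simpa using pderiv_mem_Pscal hp i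

theorem map_crossX_Pvec_le (n : ℤ) : (Pvec (n - 1)).map crossX ≤ Pvec n := by
  rintro _ ⟨q, hq, rfl⟩
  refine mem_Pvec.mpr fun i => sub_mem ?_ ?_ <;>
    simpa using X_mul_mem_Pscal (mem_Pvec.mp hq _) _

theorem sum_X_mul_crossX (q : Fin 3 → MvPolynomial (Fin 3) ℝ) :
    ∑ i, X i * crossX q i = 0 := by
  simp only [crossX_apply, Fin.sum_univ_three, Fin.reduceAdd]
  ring

noncomputable def curl (w : Fin 3 → MvPolynomial (Fin 3) ℝ) :
    Fin 3 → MvPolynomial (Fin 3) ℝ :=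
  fun i => pderiv (i + 1) (w (i + 2)) - pderiv (i + 2) (w (i + 1))

theorem curl_mem_Pvec {n : ℤ} {w : Fin 3 → MvPolynomial (Fin 3) ℝ} (hw : w ∈ Pvec n) :
    curl w ∈ Pvec (n - 1) :=
  mem_Pvec.mpr fun _ => sub_mem (pderiv_mem_Pscal (mem_Pvec.mp hw _) _)
    (pderiv_mem_Pscal (mem_Pvec.mp hw _) _)

theorem crossX_curl (w : Fin 3 → MvPolynomial (Fin 3) ℝ) (i : Fin 3) :
    crossX (curl w) i = pderiv i (∑ j, X j * w j) - w i - ∑ j, X j * pderiv j (w i) := by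
  fin_cases i <;>
  simp [curl, Fin.sum_univ_three, pderiv_X] <;> ring

theorem disjoint_range_gradLM_range_crossX :
    Disjoint (LinearMap.range gradLM) (LinearMap.range crossX) := by
  rw [Submodule.disjoint_def]
  rintro _ ⟨p, rfl⟩ ⟨q, hq⟩
  have hp : p = C (coeff 0 p) := eq_C_of_sum_X_mul_pderiv_eq_zero <| by
    simpa only [hq, gradLM_apply] using sum_X_mul_crossX q
  rw [hp]
  ext1 i
  simp

theorem mem_sup_of_isHomogeneous {m : ℕ} {v : Fin 3 → MvPolynomial (Fin 3) ℝ}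
    (hv : ∀ i, (v i).IsHomogeneous m) :
    v ∈ (Pscal (m + 1)).map gradLM ⊔ (Pvec (m - 1)).map crossX := by
  have hm : (m : ℝ) + 1 ≠ 0 := by positivity
  set p := ((m : ℝ) + 1)⁻¹ • ∑ j, X j * v j with hp_def
  have hp : p.IsHomogeneous (m + 1) := by
    rw [hp_def, smul_eq_C_mul]
    refine IsHomogeneous.C_mul (IsHomogeneous.sum _ _ _ fun j _ => ?_) _
    simpa only [add_comm] using (isHomogeneous_X ℝ j).mul (hv j)
  have hxp : ∑ j, X j * pderiv j p = ∑ j, X j * v j := by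
    rw [hp.sum_X_mul_pderiv, hp_def, ← Nat.cast_smul_eq_nsmul ℝ, smul_smul]
    push_cast
    rw [mul_inv_cancel₀ hm, one_smul]
  set w := v - gradLM p with hw_def
  have hw : ∀ i, (w i).IsHomogeneous m := fun i => (hv i).sub (by simpa using hp.pderiv)
  have hxw : ∑ j, X j * w j = 0 := by
    simp [hw_def, mul_sub, sum_sub_distrib, hxp]
  have hcurl : crossX (-((m : ℝ) + 1)⁻¹ • curl w) = w := by
    ext1 i
    have hwi : 0 - w i - (m : ℝ) • w i = -((m : ℝ) + 1) • w i := by module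
    rw [map_smul, Pi.smul_apply, crossX_curl, hxw, (hw i).sum_X_mul_pderiv, map_zero,
      ← Nat.cast_smul_eq_nsmul ℝ, hwi, smul_smul, neg_mul_neg, inv_mul_cancel₀ hm, one_smul]
  have hvw : v = gradLM p + crossX (-((m : ℝ) + 1)⁻¹ • curl w) := by
    rw [hcurl, hw_def, add_sub_cancel]
  rw [hvw]
  refine add_mem (Submodule.mem_sup_left (Submodule.mem_map_of_mem ?_))
    (Submodule.mem_sup_right (Submodule.mem_map_of_mem ?_))
  · exact_mod_cast hp.mem_Pscal
  · exact Submodule.smul_mem _ _ (curl_mem_Pvec (mem_Pvec.mpr fun i => (hw i).mem_Pscal))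

theorem Pvec_natCast_le_sup (k : ℕ) :
    Pvec k ≤ (Pscal (k + 1)).map gradLM ⊔ (Pvec (k - 1)).map crossX := by
  intro v hv
  have hsum : ∑ m ∈ range (k + 1), (fun i => homogeneousComponent m (v i)) = v := by
    ext1 i
    simpa only [Finset.sum_apply] using
      sum_homogeneousComponent_of_totalDegree_le (mem_Pscal_natCast.mp (mem_Pvec.mp hv i))
  rw [← hsum]
  refine sum_mem fun m hm => ?_
  have hmk : (m : ℤ) ≤ k := by have := mem_range.mp hm; omega
  have hmono : (Pscal (m + 1)).map gradLM ⊔ (Pvec (m - 1)).map crossX ≤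
      (Pscal (k + 1)).map gradLM ⊔ (Pvec (k - 1)).map crossX :=
    sup_le_sup (Submodule.map_mono (Pscal_mono (by omega)))
      (Submodule.map_mono (Pvec_mono (by omega)))
  exact hmono (mem_sup_of_isHomogeneous fun i => homogeneousComponent_isHomogeneous m (v i))

/-- `P_k³ = ∇P_{k+1} ⊕ (x × P_{k-1}³)`. -/
theorem Pk_decomposition_grad_cross (k : ℕ) :
    (Submodule.map gradLM (Pscal ((k : ℤ) + 1)) ⊔
        Submodule.map crossX (Pvec ((k : ℤ) - 1)) = Pvec (k : ℤ)) ∧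
      Disjoint (Submodule.map gradLM (Pscal ((k : ℤ) + 1)))
        (Submodule.map crossX (Pvec ((k : ℤ) - 1))) := by
  refine ⟨le_antisymm (sup_le (map_gradLM_Pscal_le _) (map_crossX_Pvec_le _))
    (Pvec_natCast_le_sup k), ?_⟩
  exact disjoint_range_gradLM_range_crossX.mono LinearMap.map_le_range LinearMap.map_le_range
end

section
/- Let φ be a scalar polynomial on a triangular face f (with barycentric coordinates λ₁, λ₂, λ₃ of the face) such that the tangential derivative of φ vanishes on each edge of f and φ vanishes at the vertices. Then φ = λ₁λ₂λ₃ ψ for some polynomial ψ of degree deg(φ) − 3. -/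
/-!
Along each edge the restriction of `φ` is a univariate polynomial whose derivative vanishes on
a segment, so it is constant, and it is zero since `φ` vanishes at a vertex of that edge. Hence
`φ` vanishes on the three lines `x₂ = 0`, `x₁ = 0`, `x₁ + x₂ = 1`, so it is divisible by each of
the linear forms `X 1`, `X 0`, `1 - X 0 - X 1`. These are pairwise non-associated irreducibles of
the factorial ring `ℝ[X 0, X 1]`, so their product divides `φ`, and the degree bound follows
from the additivity of the total degree in a domain.
-/

open MvPolynomial

namespace MvPolynomial

variable {R σ : Type*} [CommRing R]

theorem derivative_aeval [Fintype σ] (g : σ → Polynomial R) (φ : MvPolynomial σ R) :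
    Polynomial.derivative (aeval g φ) =
      ∑ i, Polynomial.derivative (g i) * aeval g (pderiv i φ) := by
  classical
  induction φ using MvPolynomial.induction_on with
  | C a => simp
  | add p q hp hq => simp [hp, hq, mul_add, Finset.sum_add_distrib]
  | mul_X p j hp =>
    simp only [map_mul, aeval_X, Polynomial.derivative_mul, hp, Derivation.leibniz, pderiv_X,
      smul_eq_mul, map_add, Finset.sum_add_distrib, Finset.sum_mul, mul_add]
    simp [Pi.single_apply, apply_ite, add_comm, mul_comm, mul_assoc]

theorem X_sub_dvd_sub_aeval_update [DecidableEq σ] (j : σ) (f q : MvPolynomial σ R) :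
    X j - f ∣ q - aeval (Function.update X j f) q := by
  set I := Ideal.span {X j - f}
  have hcomp : (Ideal.Quotient.mkₐ R I).comp (aeval (Function.update X j f)) =
      Ideal.Quotient.mkₐ R I := by
    refine algHom_ext fun i => ?_
    rcases eq_or_ne i j with rfl | hij
    · simpa [Ideal.Quotient.mkₐ_eq_mk, Ideal.Quotient.eq, I, Ideal.mem_span_singleton]
        using dvd_sub_comm.1 dvd_rfl
    · simp [hij]
  rw [← Ideal.mem_span_singleton, ← Ideal.Quotient.eq, ← Ideal.Quotient.mkₐ_eq_mk R,
    ← AlgHom.comp_apply, hcomp]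

theorem X_sub_dvd_of_eval_update_eq_zero [IsDomain R] [Infinite R] [DecidableEq σ] {j : σ}
    {f φ : MvPolynomial σ R} (h : ∀ x : σ → R, eval (Function.update x j (eval x f)) φ = 0) :
    X j - f ∣ φ := by
  have hsubst : aeval (Function.update X j f) φ = 0 := funext fun x => by
    rw [← aeval_eq_eval, ← AlgHom.comp_apply, comp_aeval, map_zero, aeval_eq_eval, ← h x]
    congr 2
    funext i
    rcases eq_or_ne i j with rfl | hij <;> simp [*]
  simpa only [hsubst, sub_zero] using X_sub_dvd_sub_aeval_update j f φ

theorem eval_add_smul_eq_zero_of_forall_Icc [Fintype σ] {φ : MvPolynomial σ ℝ} {a v : σ → ℝ}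
    (hderiv : ∀ t ∈ Set.Icc (0 : ℝ) 1, ∑ i, v i * eval (a + t • v) (pderiv i φ) = 0)
    (ha : eval a φ = 0) (t : ℝ) : eval (a + t • v) φ = 0 := by
  set g : σ → Polynomial ℝ := fun i => Polynomial.C (a i) + Polynomial.C (v i) * Polynomial.X
  have heval : ∀ (ψ : MvPolynomial σ ℝ) (s : ℝ), (aeval g ψ).eval s = eval (a + s • v) ψ := by
    intro ψ s
    rw [← Polynomial.coe_aeval_eq_eval, ← AlgHom.comp_apply, comp_aeval, ← aeval_eq_eval]
    congr 2
    funext i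
    simp [g, mul_comm s]
  have hconst : Polynomial.derivative (aeval g φ) = 0 := by
    refine Polynomial.eq_zero_of_infinite_isRoot _ ((Set.Icc_infinite zero_lt_one).mono ?_)
    intro s hs
    simpa [derivative_aeval, g, Polynomial.eval_finsetSum, heval] using hderiv s hs
  calc eval (a + t • v) φ = (aeval g φ).eval t := (heval φ t).symm
    _ = (aeval g φ).eval 0 := by
      rw [Polynomial.eq_C_of_derivative_eq_zero hconst, Polynomial.eval_C, Polynomial.eval_C]
    _ = 0 := by simpa [heval] using ha

theorem totalDegree_one_sub_X_sub_X [Nontrivial R] {i j : σ} (hij : i ≠ j) :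
    ((1 : MvPolynomial σ R) - X i - X j).totalDegree = 1 := by
  classical
  refine le_antisymm ?_ ?_
  · refine (totalDegree_sub _ _).trans (max_le ((totalDegree_sub _ _).trans ?_) ?_) <;>
      simp [totalDegree_X]
  · have hcoeff : coeff (Finsupp.single j 1) ((1 : MvPolynomial σ R) - X i - X j) = -1 := by
      simp [coeff_X, coeff_one, Finsupp.single_eq_single_iff, hij, eq_comm (a := (0 : σ →₀ ℕ))]
    simpa using le_totalDegree (s := Finsupp.single j 1) (by simp [hcoeff])

theorem irreducible_one_sub_X_sub_X [IsDomain R] {i j : σ} (hij : i ≠ j) :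
    Irreducible ((1 : MvPolynomial σ R) - X i - X j) :=
  irreducible_of_totalDegree_eq_one (totalDegree_one_sub_X_sub_X hij) fun r hr =>
    isUnit_of_dvd_one (by simpa [coeff_X, coeff_one] using hr 0)

theorem totalDegree_le_sub_of_eq_mul [IsDomain R] {φ f ψ : MvPolynomial σ R} (hf : f ≠ 0)
    (h : φ = f * ψ) : ψ.totalDegree ≤ φ.totalDegree - f.totalDegree := by
  rcases eq_or_ne ψ 0 with rfl | hψ
  · simp
  · rw [h, totalDegree_mul_of_isDomain hf hψ]
    omega

end MvPolynomial

section Triangle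

variable {φ : MvPolynomial (Fin 2) ℝ}

theorem X_one_dvd_of_edge
    (h : ∀ x : Fin 2 → ℝ, x 1 = 0 → 0 ≤ x 0 → x 0 ≤ 1 → eval x (pderiv 0 φ) = 0)
    (hv : eval (fun _ => (0 : ℝ)) φ = 0) : X 1 ∣ φ := by
  refine sub_zero (X 1 : MvPolynomial (Fin 2) ℝ) ▸ X_sub_dvd_of_eval_update_eq_zero fun x => ?_
  have hline := eval_add_smul_eq_zero_of_forall_Icc (a := fun _ => 0) (v := Pi.single 0 1)
    (fun t ht => ?_) hv (x 0)
  · refine (congrArg (fun p => eval p φ) ?_).trans hline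
    funext i
    fin_cases i <;> simp
  · simpa [Fin.sum_univ_two] using h _ (by simp) (by simpa using ht.1) (by simpa using ht.2)

theorem X_zero_dvd_of_edge
    (h : ∀ x : Fin 2 → ℝ, x 0 = 0 → 0 ≤ x 1 → x 1 ≤ 1 → eval x (pderiv 1 φ) = 0)
    (hv : eval (fun _ => (0 : ℝ)) φ = 0) : X 0 ∣ φ := by
  refine sub_zero (X 0 : MvPolynomial (Fin 2) ℝ) ▸ X_sub_dvd_of_eval_update_eq_zero fun x => ?_
  have hline := eval_add_smul_eq_zero_of_forall_Icc (a := fun _ => 0) (v := Pi.single 1 1)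
    (fun t ht => ?_) hv (x 1)
  · refine (congrArg (fun p => eval p φ) ?_).trans hline
    funext i
    fin_cases i <;> simp
  · simpa [Fin.sum_univ_two] using h _ (by simp) (by simpa using ht.1) (by simpa using ht.2)

theorem one_sub_X_sub_X_dvd_of_edge
    (h : ∀ x : Fin 2 → ℝ, x 0 + x 1 = 1 → 0 ≤ x 0 → 0 ≤ x 1 →
      eval x (pderiv 0 φ) - eval x (pderiv 1 φ) = 0)
    (hv : eval (fun i : Fin 2 => if i = 0 then (0 : ℝ) else 1) φ = 0) :
    1 - X 0 - X 1 ∣ φ := by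
  rw [show (fun i : Fin 2 => if i = 0 then (0 : ℝ) else 1) = ![0, 1] by
    funext i; fin_cases i <;> rfl] at hv
  have hdvd : X 1 - (1 - X 0) ∣ φ := X_sub_dvd_of_eval_update_eq_zero fun x => by
    have hline := eval_add_smul_eq_zero_of_forall_Icc (v := ![1, -1]) (fun t ht => ?_) hv (x 0)
    · refine (congrArg (fun p => eval p φ) ?_).trans hline
      funext i
      fin_cases i <;> simp [sub_eq_add_neg]
    · simpa [Fin.sum_univ_two, sub_eq_add_neg] using
        h _ (by simp) (by simpa using ht.1) (by simpa using ht.2)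
  rwa [show (1 - X 0 - X 1 : MvPolynomial (Fin 2) ℝ) = -(X 1 - (1 - X 0)) by ring, neg_dvd]

theorem X_zero_mul_X_one_mul_dvd {K : Type*} [Field K] {φ : MvPolynomial (Fin 2) K}
    (h0 : X 0 ∣ φ) (h1 : X 1 ∣ φ) (hL : 1 - X 0 - X 1 ∣ φ) :
    X 0 * X 1 * (1 - X 0 - X 1) ∣ φ := by
  have hirr : Irreducible (1 - X 0 - X 1 : MvPolynomial (Fin 2) K) :=
    irreducible_one_sub_X_sub_X (by decide)
  have h01 : IsRelPrime (X 0 : MvPolynomial (Fin 2) K) (X 1) :=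
    X_prime.irreducible.isRelPrime_iff_not_dvd.2 (by simp [X_dvd_X])
  have h0L : IsRelPrime (X 0) (1 - X 0 - X 1 : MvPolynomial (Fin 2) K) :=
    (hirr.isRelPrime_iff_not_dvd.2 fun ⟨c, hc⟩ => by simpa using congrArg (eval ![1, 0]) hc).symm
  have h1L : IsRelPrime (X 1) (1 - X 0 - X 1 : MvPolynomial (Fin 2) K) :=
    (hirr.isRelPrime_iff_not_dvd.2 fun ⟨c, hc⟩ => by simpa using congrArg (eval ![0, 1]) hc).symm
  exact (h0L.mul_left h1L).mul_dvd (h01.mul_dvd h0 h1) hL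

end Triangle

theorem face_bubble_factorization_general (φ : MvPolynomial (Fin 2) ℝ)
    -- tangential derivative vanishes along the edge `x₂ = 0` (tangent `e₁`)
    (h1 : ∀ x : Fin 2 → ℝ, x 1 = 0 → 0 ≤ x 0 → x 0 ≤ 1 → eval x (pderiv 0 φ) = 0)
    -- tangential derivative vanishes along the edge `x₁ = 0` (tangent `e₂`)
    (h2 : ∀ x : Fin 2 → ℝ, x 0 = 0 → 0 ≤ x 1 → x 1 ≤ 1 → eval x (pderiv 1 φ) = 0)
    -- tangential derivative vanishes along the edge `x₁ + x₂ = 1` (tangent `(1,-1)`)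
    (h3 : ∀ x : Fin 2 → ℝ, x 0 + x 1 = 1 → 0 ≤ x 0 → 0 ≤ x 1 →
      eval x (pderiv 0 φ) - eval x (pderiv 1 φ) = 0)
    -- `φ` vanishes at the three vertices
    (hv1 : eval (fun _ => (0 : ℝ)) φ = 0)
    (hv3 : eval (fun i : Fin 2 => if i = 0 then (0 : ℝ) else 1) φ = 0) :
    ∃ ψ : MvPolynomial (Fin 2) ℝ,
      φ = X 0 * X 1 * (1 - X 0 - X 1) * ψ ∧ ψ.totalDegree ≤ φ.totalDegree - 3 := by
  obtain ⟨ψ, hψ⟩ := X_zero_mul_X_one_mul_dvd (X_zero_dvd_of_edge h2 hv1)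
    (X_one_dvd_of_edge h1 hv1) (one_sub_X_sub_X_dvd_of_edge h3 hv3)
  have hL : (1 - X 0 - X 1 : MvPolynomial (Fin 2) ℝ) ≠ 0 :=
    (irreducible_one_sub_X_sub_X (by decide)).ne_zero
  have hX : (X 0 * X 1 : MvPolynomial (Fin 2) ℝ) ≠ 0 := mul_ne_zero (X_ne_zero _) (X_ne_zero _)
  have hdeg : (X 0 * X 1 * (1 - X 0 - X 1) : MvPolynomial (Fin 2) ℝ).totalDegree = 3 := by
    rw [totalDegree_mul_of_isDomain hX hL, totalDegree_mul_of_isDomain (X_ne_zero _) (X_ne_zero _),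
      totalDegree_X, totalDegree_X, totalDegree_one_sub_X_sub_X (by decide)]
  exact ⟨ψ, hψ, hdeg ▸ totalDegree_le_sub_of_eq_mul (mul_ne_zero hX hL) hψ⟩

/-- A polynomial on the (reference) triangular face with vertices `(0,0), (1,0), (0,1)`
whose tangential derivative vanishes on each edge and which vanishes at the vertices
is divisible by the product `λ₁λ₂λ₃` of the barycentric coordinates. -/
theorem face_bubble_factorization (φ : MvPolynomial (Fin 2) ℝ)
    -- tangential derivative vanishes along the edge `x₂ = 0` (tangent `e₁`)
    (h1 : ∀ x : Fin 2 → ℝ, x 1 = 0 → 0 ≤ x 0 → x 0 ≤ 1 → eval x (pderiv 0 φ) = 0)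
    -- tangential derivative vanishes along the edge `x₁ = 0` (tangent `e₂`)
    (h2 : ∀ x : Fin 2 → ℝ, x 0 = 0 → 0 ≤ x 1 → x 1 ≤ 1 → eval x (pderiv 1 φ) = 0)
    -- tangential derivative vanishes along the edge `x₁ + x₂ = 1` (tangent `(1,-1)`)
    (h3 : ∀ x : Fin 2 → ℝ, x 0 + x 1 = 1 → 0 ≤ x 0 → 0 ≤ x 1 →
      eval x (pderiv 0 φ) - eval x (pderiv 1 φ) = 0)
    -- `φ` vanishes at the three vertices
    (hv1 : eval (fun _ => (0 : ℝ)) φ = 0)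
    (hv2 : eval (fun i : Fin 2 => if i = 0 then (1 : ℝ) else 0) φ = 0)
    (hv3 : eval (fun i : Fin 2 => if i = 0 then (0 : ℝ) else 1) φ = 0) :
    ∃ ψ : MvPolynomial (Fin 2) ℝ,
      φ = X 0 * X 1 * (1 - X 0 - X 1) * ψ ∧ ψ.totalDegree ≤ φ.totalDegree - 3 :=
  face_bubble_factorization_general φ h1 h2 h3 hv1 hv3
end

section
/- Let φ ∈ P₆([0,1]) be a polynomial of degree at most 6. Then φ'(1/3) = −(248/81)φ(0) − (8/81)φ(1) + (256/81)φ(1/2) − (40/81)φ'(0) + (1/81)φ'(1) − (2/81)φ''(0). -/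
open Polynomial

/-- For a polynomial of degree at most 6,
`φ'(1/3) = −(248/81)φ(0) − (8/81)φ(1) + (256/81)φ(1/2) − (40/81)φ'(0) + (1/81)φ'(1)
− (2/81)φ''(0)`. -/
theorem deriv_at_third (φ : Polynomial ℝ) (hdeg : φ.natDegree ≤ 6) :
    (derivative φ).eval (1 / 3) =
      -(248 / 81) * φ.eval 0 - (8 / 81) * φ.eval 1 + (256 / 81) * φ.eval (1 / 2) -
        (40 / 81) * (derivative φ).eval 0 + (1 / 81) * (derivative φ).eval 1 -
          (2 / 81) * (derivative (derivative φ)).eval 0 := by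
  have h := Polynomial.as_sum_range' φ 7 (lt_of_le_of_lt hdeg (by norm_num))
  rw [h]
  simp only [Finset.sum_range_succ, Finset.sum_range_zero, derivative_add, derivative_monomial,
    eval_add, eval_monomial, zero_add]
  push_cast
  ring
end

section
/- Let φ ∈ P₆([0,1]) be a polynomial of degree at most 6. Then φ'(2/3) = (8/81)φ(0) + (248/81)φ(1) − (256/81)φ(1/2) + (1/81)φ'(0) − (40/81)φ'(1) + (2/81)φ''(1). -/
open Polynomial

/-- For a polynomial of degree at most 6,
`φ'(2/3) = (8/81)φ(0) + (248/81)φ(1) − (256/81)φ(1/2) + (1/81)φ'(0) − (40/81)φ'(1)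
+ (2/81)φ''(1)`. -/
theorem deriv_at_two_thirds (φ : Polynomial ℝ) (hdeg : φ.natDegree ≤ 6) :
    (derivative φ).eval (2 / 3) =
      (8 / 81) * φ.eval 0 + (248 / 81) * φ.eval 1 - (256 / 81) * φ.eval (1 / 2) +
        (1 / 81) * (derivative φ).eval 0 - (40 / 81) * (derivative φ).eval 1 +
          (2 / 81) * (derivative (derivative φ)).eval 1 := by
  have h1 : φ.natDegree < 7 := lt_of_le_of_lt hdeg (by norm_num)
  have h2 : (derivative φ).natDegree < 7 :=
    lt_of_le_of_lt (natDegree_derivative_le φ) (lt_of_le_of_lt (Nat.sub_le _ _) h1)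
  have h3 : (derivative (derivative φ)).natDegree < 7 :=
    lt_of_le_of_lt (natDegree_derivative_le _) (lt_of_le_of_lt (Nat.sub_le _ _) h2)
  rw [eval_eq_sum_range' h1, eval_eq_sum_range' h1, eval_eq_sum_range' h1,
    eval_eq_sum_range' h2, eval_eq_sum_range' h2, eval_eq_sum_range' h2,
    eval_eq_sum_range' h3]
  simp only [Finset.sum_range_succ, Finset.sum_range_zero, coeff_derivative]
  rw [coeff_eq_zero_of_natDegree_lt (show φ.natDegree < 7 from h1),
    coeff_eq_zero_of_natDegree_lt (show φ.natDegree < 8 by omega)]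
  push_cast
  ring_nf
end
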